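/- Every nontrivial block gluing tree-shift of finite type has positive topological entropy: if X = X_{A_0,A_1} is a nonempty block gluing vertex tree-shift with |B_1(X)| ≥ 2, then liminf_{n→∞} ln(ln |B_n(X)|)/n > 0. -/

import Mathlib

/-- Words over the binary alphabet Σ = {0,1}, encoded as lists of booleans
(0 ↦ `false`, 1 ↦ `true`).  Concatenation of words is list append. -/
abbrev Word : Type := List Bool

/-- An infinite tree over the alphabet `A`: a labeling of Σ* by `A`. -/
abbrev ITree (A : Type) : Type := Word → A

/-- The shift map σ_w, given by (σ_w t)(x) = t(wx). -/
def shiftW {A : Type} (w : Word) (t : ITree A) : ITree A := fun x => t (w ++ x)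

/-- A pattern: a support (set of nodes) together with labels.  Only the values
of `val` on `supp` are relevant. -/
structure Pattern (A : Type) where
  supp : Set Word
  val : Word → A

/-- The support of a pattern is prefix-closed. -/
def Pattern.PrefixClosed {A : Type} (u : Pattern A) : Prop :=
  ∀ x ∈ u.supp, ∀ y : Word, y <+: x → y ∈ u.supp

/-- A leaf of a pattern: a node of the support none of whose children lies in
the support. -/
def Pattern.IsLeaf {A : Type} (u : Pattern A) (w : Word) : Prop :=
  w ∈ u.supp ∧ ∀ i : Bool, w ++ [i] ∉ u.supp

/-- The pattern `u` is accepted by the tree `t` (rooted at some node `x`). -/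
def AcceptedBy {A : Type} (u : Pattern A) (t : ITree A) : Prop :=
  ∃ x : Word, ∀ y ∈ u.supp, u.val y = t (x ++ y)

/-- The pattern `u` is accepted by some tree of `X`. -/
def AcceptedIn {A : Type} (X : Set (ITree A)) (u : Pattern A) : Prop :=
  ∃ t ∈ X, AcceptedBy u t

/-- The set of trees avoiding every pattern of the forbidden set `F`. -/
def treeShiftOf {A : Type} (F : Set (Pattern A)) : Set (ITree A) :=
  { t | ∀ u ∈ F, ¬ AcceptedBy u t }

/-- A tree-shift: a set of trees of the form `X_F` for a set `F` of finite
(prefix-closed) patterns. -/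
def IsTreeShift {A : Type} (X : Set (ITree A)) : Prop :=
  ∃ F : Set (Pattern A), (∀ u ∈ F, u.supp.Finite ∧ u.PrefixClosed) ∧ X = treeShiftOf F

/-- A complete prefix code: a finite set of nonempty words, none a prefix of
another, such that every word of length ≥ max{|p| : p ∈ P} has a prefix in P. -/
def IsCPC (P : Finset Word) : Prop :=
  ([] : Word) ∉ P ∧
  (∀ p ∈ P, ∀ q ∈ P, p <+: q → p = q) ∧
  (∀ x : Word, P.sup List.length ≤ x.length → ∃ p ∈ P, p <+: x)

/-- Σ^k, the set of all words of length k, as a finite set. -/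
def fullCode (k : ℕ) : Finset Word :=
  Finset.image (fun f : Fin k → Bool => List.ofFn f) Finset.univ

/-- Σ_{n-1}: the set of all words of length < n (i.e. length ≤ n-1). -/
def sigmaLt (n : ℕ) : Set Word := { x : Word | x.length < n }

/-- An n-block of `X`: a pattern with support Σ_{n-1} accepted by some tree of `X`. -/
def IsNBlock {A : Type} (X : Set (ITree A)) (n : ℕ) (u : Pattern A) : Prop :=
  u.supp = sigmaLt n ∧ AcceptedIn X u

/-- A (finite, prefix-closed) pattern accepted by some tree of `X`. -/
def GoodPattern {A : Type} (X : Set (ITree A)) (u : Pattern A) : Prop :=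
  u.supp.Finite ∧ u.PrefixClosed ∧ AcceptedIn X u

/-- Patterns `u`, `v` are connected through `P` in `X`: there is `t ∈ X`
agreeing with `u` on its support and with a copy of `v` rooted at `wx` for
every leaf `w` of `u` and every `x ∈ P`. -/
def ConnectedThrough {A : Type} (X : Set (ITree A)) (P : Finset Word) (u v : Pattern A) : Prop :=
  ∃ t ∈ X, (∀ y ∈ u.supp, t y = u.val y) ∧
    ∀ w : Word, u.IsLeaf w → ∀ x ∈ P, ∀ y ∈ v.supp, t (w ++ x ++ y) = v.val y

/-- Block gluing: a single CPC connects any two n-blocks, for every n. -/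
def BlockGluing {A : Type} (X : Set (ITree A)) : Prop :=
  ∃ P : Finset Word, IsCPC P ∧ ∀ n : ℕ, ∀ u v : Pattern A,
    IsNBlock X n u → IsNBlock X n v → ConnectedThrough X P u v

/-- Uniformly block gluing: the CPC can be taken of the form Σ^k. -/
def UniformlyBlockGluing {A : Type} (X : Set (ITree A)) : Prop :=
  ∃ k : ℕ, IsCPC (fullCode k) ∧ ∀ n : ℕ, ∀ u v : Pattern A,
    IsNBlock X n u → IsNBlock X n v → ConnectedThrough X (fullCode k) u v

/-- Strongly irreducible: a single CPC connects any two accepted patterns. -/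
def StronglyIrreducible {A : Type} (X : Set (ITree A)) : Prop :=
  ∃ P : Finset Word, IsCPC P ∧ ∀ u v : Pattern A,
    GoodPattern X u → GoodPattern X v → ConnectedThrough X P u v

/-- Uniformly strongly irreducible: the CPC can be taken of the form Σ^k. -/
def UniformlyStronglyIrreducible {A : Type} (X : Set (ITree A)) : Prop :=
  ∃ k : ℕ, IsCPC (fullCode k) ∧ ∀ u v : Pattern A,
    GoodPattern X u → GoodPattern X v → ConnectedThrough X (fullCode k) u v

/-- A leaf of a set of nodes. -/
def SetLeaf (L : Set Word) (w : Word) : Prop := w ∈ L ∧ ∀ i : Bool, w ++ [i] ∉ L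

/-- Topological mixing. -/
def TopologicallyMixing {A : Type} (X : Set (ITree A)) : Prop :=
  ∀ L1 L2 : Set Word, L1.Finite → L2.Finite →
    (∀ x ∈ L1, ∀ y : Word, y <+: x → y ∈ L1) →
    (∀ x ∈ L2, ∀ y : Word, y <+: x → y ∈ L2) →
    ∃ P : Finset Word, IsCPC P ∧ ∀ t1 ∈ X, ∀ t2 ∈ X, ∃ t ∈ X,
      (∀ y ∈ L1, t y = t1 y) ∧
      ∀ w : Word, SetLeaf L1 w → ∀ x ∈ P, ∀ y ∈ L2, t (w ++ x ++ y) = t2 y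

/-- The vertex tree-shift of the pair of 0-1 matrices `A0`, `A1`. -/
def vertexShift {A : Type} (A0 A1 : A → A → Bool) : Set (ITree A) :=
  { t | ∀ x : Word,
      A0 (t x) (t (x ++ [false])) = true ∧ A1 (t x) (t (x ++ [true])) = true }

/-- The n-blocks of `X`, realized as labelings of Σ_{n-1}; used for counting
`|B_n(X)|`. -/
def blockFuns {A : Type} (X : Set (ITree A)) (n : ℕ) :
    Set ({ x : Word // x.length < n } → A) :=
  { f | ∃ t ∈ X, ∃ r : Word, ∀ y : { x : Word // x.length < n }, f y = t (r ++ y.val) }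

/-!
Block gluing through a complete prefix code lets one place any two symbols of `X` at the root and
at a fixed word `x₀` of the code. A vertex shift has memory one, so the subtree at a node can be
replaced by any tree of `X` whose root carries the same label. Iterating along the positions
`x₀ i₁ x₀ i₂ ⋯ x₀ iₖ x₀`, two distinct symbols can be placed independently at all `2 ^ k` of them,
so `|B_n(X)| ≥ 2 ^ 2 ^ k` once `n ≥ (k + 1) (|x₀| + 1)`, i.e. `ln ln |B_n(X)| ≳ n ln 2 / (|x₀| + 1)`.
The bound `|B_n(X)| ≤ |A| ^ 3 ^ n` keeps `ln ln |B_n(X)| / n` bounded above, which is needed for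
the real `liminf` not to take its junk value.
-/

section TreeShift

variable {A : Type}

def graft (t s : ITree A) (q : Word) : ITree A :=
  fun x => if q <+: x then s (x.drop q.length) else t x

lemma graft_append (t s : ITree A) (q y : Word) : graft t s q (q ++ y) = s y := by
  simp [graft]

lemma graft_of_not_prefix (t s : ITree A) {q x : Word} (h : ¬ q <+: x) :
    graft t s q x = t x := if_neg h

lemma graft_mem_vertexShift {A0 A1 : A → A → Bool} {t s : ITree A} {q : Word}
    (ht : t ∈ vertexShift A0 A1) (hs : s ∈ vertexShift A0 A1) (hroot : s [] = t q) :
    graft t s q ∈ vertexShift A0 A1 := by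
  intro x
  by_cases hx : q <+: x
  · obtain ⟨y, rfl⟩ := hx
    simp only [List.append_assoc, graft_append]
    exact hs y
  · -- a child `x ++ [i]` of a node outside the grafted subtree lies in it only if it is `q`
    have hchild : ∀ i : Bool, graft t s q (x ++ [i]) = t (x ++ [i]) := by
      intro i
      by_cases hq : q <+: x ++ [i]
      · have hq' : q = x ++ [i] := by
          refine hq.eq_of_length (le_antisymm (by simpa using hq.length_le) ?_)
          by_contra! hlt
          exact hx (List.prefix_of_prefix_length_le hq (List.prefix_append x [i])
            (by simp at hlt; omega))
        subst hq'
        simpa [hroot] using graft_append t s (x ++ [i]) []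
      · exact graft_of_not_prefix t s hq
    rw [graft_of_not_prefix t s hx, hchild, hchild]
    exact ht x

def Appears (X : Set (ITree A)) (e : A) : Prop := ∃ t ∈ X, ∃ w, t w = e

def SymbolsGlueAt (X : Set (ITree A)) (x₀ : Word) : Prop :=
  ∀ e d, Appears X e → Appears X d → ∃ t ∈ X, t [] = e ∧ t x₀ = d

lemma IsCPC.nonempty {P : Finset Word} (hP : IsCPC P) : P.Nonempty :=
  let ⟨p, hp, _⟩ := hP.2.2 (List.replicate (P.sup List.length) false) (by simp)
  ⟨p, hp⟩

lemma sigmaLt_one : sigmaLt 1 = {[]} := by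
  ext x
  simp [sigmaLt]

lemma isNBlock_one_const {X : Set (ITree A)} {e : A} (he : Appears X e) :
    IsNBlock X 1 ⟨sigmaLt 1, fun _ => e⟩ := by
  obtain ⟨t, ht, w, rfl⟩ := he
  exact ⟨rfl, t, ht, w, by simp [sigmaLt_one]⟩

lemma BlockGluing.exists_symbolsGlueAt {X : Set (ITree A)} (hX : BlockGluing X) :
    ∃ x₀, SymbolsGlueAt X x₀ := by
  obtain ⟨P, hP, hconn⟩ := hX
  obtain ⟨x₀, hx₀⟩ := hP.nonempty
  refine ⟨x₀, fun e d he hd => ?_⟩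
  obtain ⟨t, ht, hroot, hleaf⟩ := hconn 1 _ _ (isNBlock_one_const he) (isNBlock_one_const hd)
  have hnil : ([] : Word) ∈ sigmaLt 1 := by simp [sigmaLt_one]
  refine ⟨t, ht, hroot [] hnil, ?_⟩
  simpa using hleaf [] ⟨hnil, fun i => by simp [sigmaLt_one]⟩ x₀ hx₀ [] hnil

def spacedWord (x₀ : Word) : List Bool → Word
  | [] => x₀
  | i :: s => x₀ ++ i :: spacedWord x₀ s

lemma length_spacedWord (x₀ : Word) (s : List Bool) :
    (spacedWord x₀ s).length = (s.length + 1) * x₀.length + s.length := by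
  induction s with
  | nil => simp [spacedWord]
  | cons i s ih => simp [spacedWord, ih]; ring

lemma SymbolsGlueAt.exists_mem_vertexShift {A0 A1 : A → A → Bool} {x₀ : Word}
    (hx₀ : SymbolsGlueAt (vertexShift A0 A1) x₀) (k : ℕ) {e : A}
    (he : Appears (vertexShift A0 A1) e) (g : List Bool → A)
    (hg : ∀ s, Appears (vertexShift A0 A1) (g s)) :
    ∃ T ∈ vertexShift A0 A1, T [] = e ∧
      ∀ s : List Bool, s.length = k → T (spacedWord x₀ s) = g s := by
  induction k generalizing e g with
  | zero =>
    obtain ⟨t, ht, hroot, hx⟩ := hx₀ e (g []) he (hg [])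
    exact ⟨t, ht, hroot, fun s hs => by rwa [List.length_eq_zero_iff.mp hs]⟩
  | succ k ih =>
    obtain ⟨T₀, hT₀, hT₀e, -⟩ := hx₀ e e he he
    have hchild (i : Bool) : Appears (vertexShift A0 A1) (T₀ (x₀ ++ [i])) := ⟨T₀, hT₀, _, rfl⟩
    obtain ⟨T₁, hT₁, hT₁r, hT₁s⟩ := ih (hchild false) (fun s => g (false :: s)) (fun s => hg _)
    obtain ⟨T₂, hT₂, hT₂r, hT₂s⟩ := ih (hchild true) (fun s => g (true :: s)) (fun s => hg _)
    have h₁ := graft_mem_vertexShift hT₀ hT₁ hT₁r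
    refine ⟨graft (graft T₀ T₁ (x₀ ++ [false])) T₂ (x₀ ++ [true]),
      graft_mem_vertexShift h₁ hT₂ ?_, ?_, ?_⟩
    · rw [hT₂r, graft_of_not_prefix _ _ (by simp)]
    · rw [graft_of_not_prefix _ _ (by simp), graft_of_not_prefix _ _ (by simp), hT₀e]
    · rintro (_ | ⟨i, s⟩) hs
      · simp at hs
      have hk : s.length = k := by simpa using hs
      have hpos : spacedWord x₀ (i :: s) = x₀ ++ [i] ++ spacedWord x₀ s := by simp [spacedWord]
      cases i
      · rw [hpos, graft_of_not_prefix _ _ (by simp), graft_append, hT₁s s hk]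
      · rw [hpos, graft_append, hT₂s s hk]

instance (n : ℕ) : Finite {x : Word // x.length < n} := (List.finite_length_lt Bool n).to_subtype

lemma exists_ne_appears_of_two_le_ncard_blockFuns_one [Finite A] {X : Set (ITree A)}
    (h2 : 2 ≤ (blockFuns X 1).ncard) : ∃ a b, a ≠ b ∧ Appears X a ∧ Appears X b := by
  obtain ⟨f, g, ⟨t, ht, r, hf⟩, ⟨t', ht', r', hg⟩, hfg⟩ := (Set.one_lt_ncard_iff).mp h2
  let root : {x : Word // x.length < 1} := ⟨[], Nat.one_pos⟩
  have hsub (y : {x : Word // x.length < 1}) : y = root := Subtype.ext (by simpa using y.2)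
  refine ⟨f root, g root, fun h => hfg (funext fun y => hsub y ▸ h), ⟨t, ht, _, (hf root).symm⟩,
    ⟨t', ht', _, (hg root).symm⟩⟩

lemma two_pow_card_le_ncard_blockFuns [Finite A] {X : Set (ITree A)} {ι : Type*} [Fintype ι]
    {n : ℕ} (p : ι → Word) (hp : ∀ i, (p i).length < n) {a b : A} (hab : a ≠ b)
    (hreal : ∀ g : ι → Bool, ∃ T ∈ X, ∀ i, T (p i) = if g i then a else b) :
    2 ^ Fintype.card ι ≤ (blockFuns X n).ncard := by
  choose T hT hTp using hreal
  let block (g : ι → Bool) : blockFuns X n :=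
    ⟨fun y => T g y.val, T g, hT g, [], fun y => rfl⟩
  have hblock : Function.Injective block := by
    intro g g' h
    funext i
    have hi := congrFun (congrArg Subtype.val h) ⟨p i, hp i⟩
    simp only [block, hTp] at hi
    revert hi
    cases g i <;> cases g' i <;> simp [hab, hab.symm]
  simpa [Nat.card_coe_set_eq, Nat.card_fun] using Nat.card_le_card_of_injective block hblock

lemma ncard_blockFuns_le [Fintype A] [Nonempty A] (X : Set (ITree A)) (n : ℕ) :
    (blockFuns X n).ncard ≤ Fintype.card A ^ 3 ^ n := by
  have hwords : Nat.card {x : Word // x.length < n} ≤ 3 ^ n := by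
    have hinj : Function.Injective
        fun (x : {x : Word // x.length < n}) (i : Fin n) => x.val[i.val]? := by
      intro x y hxy
      refine Subtype.ext (List.ext_getElem? fun m => ?_)
      by_cases hm : m < n
      · exact congrFun hxy ⟨m, hm⟩
      · rw [List.getElem?_eq_none (by have := x.2; omega),
          List.getElem?_eq_none (by have := y.2; omega)]
    simpa using Nat.card_le_card_of_injective _ hinj
  calc (blockFuns X n).ncard ≤ Nat.card ({x : Word // x.length < n} → A) := by
        rw [← Nat.card_coe_set_eq]
        exact Nat.card_le_card_of_injective _ Subtype.val_injective
    _ = Fintype.card A ^ Nat.card {x : Word // x.length < n} := by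
        rw [Nat.card_fun, Nat.card_eq_fintype_card]
    _ ≤ Fintype.card A ^ 3 ^ n :=
        Nat.pow_le_pow_right Fintype.card_pos hwords

lemma SymbolsGlueAt.two_pow_two_pow_le_ncard_blockFuns [Finite A] {A0 A1 : A → A → Bool}
    {x₀ : Word} (hx₀ : SymbolsGlueAt (vertexShift A0 A1) x₀) {a b : A} (hab : a ≠ b)
    (ha : Appears (vertexShift A0 A1) a) (hb : Appears (vertexShift A0 A1) b) {k n : ℕ}
    (hkn : (k + 1) * (x₀.length + 1) ≤ n) :
    2 ^ 2 ^ k ≤ (blockFuns (vertexShift A0 A1) n).ncard := by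
  have hp (v : List.Vector Bool k) : (spacedWord x₀ v.1).length < n := by
    rw [length_spacedWord, v.2]
    nlinarith
  have := two_pow_card_le_ncard_blockFuns (fun v : List.Vector Bool k => spacedWord x₀ v.1) hp hab
    fun g => by
      obtain ⟨T, hT, -, hTs⟩ := hx₀.exists_mem_vertexShift k ha
        (fun s => if hs : s.length = k then (if g ⟨s, hs⟩ then a else b) else a)
        (fun s => by split_ifs <;> assumption)
      exact ⟨T, hT, fun v => by rw [hTs v.1 v.2, dif_pos v.2]; rfl⟩
  simpa [card_vector] using this

end TreeShift

section Asymptotics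

open Real Filter

lemma log_log_le_of_le_pow_pow {x c : ℝ} {b n : ℕ} (hx : 1 < x) (hc : 1 < c) (hb : 0 < b)
    (h : x ≤ c ^ b ^ n) : log (log x) ≤ n * log b + log (log c) := by
  have hlog : log x ≤ b ^ n * log c := by
    simpa [log_pow] using log_le_log (by linarith) h
  calc log (log x) ≤ log (b ^ n * log c) := log_le_log (log_pos hx) hlog
    _ = n * log b + log (log c) := by
      rw [log_mul (by positivity) (log_pos hc).ne', log_pow]

lemma le_log_log_of_pow_pow_le {x c : ℝ} {b k : ℕ} (hc : 1 < c) (hb : 0 < b)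
    (h : c ^ b ^ k ≤ x) : k * log b + log (log c) ≤ log (log x) := by
  have hlog : b ^ k * log c ≤ log x := by
    simpa [log_pow] using log_le_log (by positivity) h
  calc (k : ℝ) * log b + log (log c) = log (b ^ k * log c) := by
        rw [log_mul (by positivity) (log_pos hc).ne', log_pow]
    _ ≤ log (log x) := log_le_log (by have := log_pos hc; positivity) hlog

lemma liminf_log_log_div_pos {N : ℕ → ℝ} {m b : ℕ} {c : ℝ} (hm : 0 < m) (hb : 0 < b)
    (hc : 1 < c) (hlow : ∀ k n, (k + 1) * m ≤ n → (2 : ℝ) ^ 2 ^ k ≤ N n)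
    (hup : ∀ n, N n ≤ c ^ b ^ n) :
    0 < liminf (fun n : ℕ => log (log (N n)) / n) atTop := by
  have hlog2 : 0 < log 2 := log_pos one_lt_two
  have hbdd : ∀ᶠ n : ℕ in atTop, log (log (N n)) / n ≤ log b + |log (log c)| := by
    filter_upwards [eventually_ge_atTop m] with n hn
    have hn0 : (0 : ℝ) < n := by exact_mod_cast hm.trans_le hn
    have hN : 1 < N n := by
      have := hlow 0 n (by simpa using hn)
      norm_num at this
      linarith
    rw [div_le_iff₀ hn0]
    have := log_log_le_of_le_pow_pow hN hc hb (hup n)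
    nlinarith [le_abs_self (log (log c)), abs_nonneg (log (log c)),
      (by exact_mod_cast Nat.one_le_of_lt (hm.trans_le hn) : (1 : ℝ) ≤ n)]
  set c₀ := log 2 / (2 * m)
  have hc₀ : 0 < c₀ := by positivity
  -- With `k = n / m - 1` one has `n < (k + 2) m`, so `k log 2 + log log 2` is at least
  -- `2 n c₀ - (2 log 2 - log log 2)`, and the subtracted constant is below `n c₀` for large `n`.
  have hlarge : ∀ᶠ n : ℕ in atTop, c₀ ≤ log (log (N n)) / n := by
    filter_upwards [eventually_ge_atTop (2 * m),
      (tendsto_natCast_atTop_atTop (R := ℝ)).eventually_ge_atTop ((2 * log 2 - log (log 2)) / c₀)]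
      with n hn hD
    have hn0 : (0 : ℝ) < n := by exact_mod_cast (by omega : 0 < n)
    set k := n / m - 1
    have hk : k + 1 = n / m := by
      have : 2 ≤ n / m := (Nat.le_div_iff_mul_le hm).mpr (by linarith)
      omega
    have hkn : (n : ℝ) < (k + 2) * m := by
      have := Nat.lt_div_mul_add (a := n) hm
      rw [← hk] at this
      exact_mod_cast (by linarith : n < (k + 2) * m)
    have := le_log_log_of_pow_pow_le one_lt_two two_pos
      (hlow k n (by rw [hk]; exact Nat.div_mul_le_self n m))
    rw [div_le_iff₀ hc₀] at hD
    rw [le_div_iff₀ hn0]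
    simp only [c₀, Nat.cast_ofNat] at hD this ⊢
    have hm0 : (0 : ℝ) < m := by exact_mod_cast hm
    rw [div_mul_eq_mul_div, div_le_iff₀ (by positivity)]
    rw [mul_div_assoc', le_div_iff₀ (by positivity)] at hD
    nlinarith [mul_lt_mul_of_pos_right hkn hlog2]
  exact hc₀.trans_le (le_liminf_of_le
    (isBoundedUnder_of_eventually_le hbdd).isCoboundedUnder_ge hlarge)

end Asymptotics

theorem stmt8_general {A : Type} [Fintype A] (A0 A1 : A → A → Bool)
    (hbg : BlockGluing (vertexShift A0 A1))
    (h2 : 2 ≤ (blockFuns (vertexShift A0 A1) 1).ncard) :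
    0 < Filter.liminf
      (fun n : ℕ =>
        Real.log (Real.log ((blockFuns (vertexShift A0 A1) n).ncard : ℝ)) / (n : ℝ))
      Filter.atTop := by
  obtain ⟨x₀, hx₀⟩ := hbg.exists_symbolsGlueAt
  obtain ⟨a, b, hab, ha, hb⟩ := exists_ne_appears_of_two_le_ncard_blockFuns_one h2
  have : Nonempty A := ⟨a⟩
  refine liminf_log_log_div_pos (m := x₀.length + 1) (b := 3) (c := Fintype.card A)
    x₀.length.succ_pos three_pos
    (by exact_mod_cast Fintype.one_lt_card_iff.mpr ⟨a, b, hab⟩) (fun k n hkn => ?_) (fun n => ?_)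
  · exact_mod_cast hx₀.two_pow_two_pow_le_ncard_blockFuns hab ha hb hkn
  · exact_mod_cast ncard_blockFuns_le _ n

/-- every nontrivial block gluing vertex tree-shift has positive
topological entropy: liminf ln(ln |B_n(X)|)/n > 0. -/
theorem stmt8 {A : Type} [Fintype A] (A0 A1 : A → A → Bool)
    (hne : (vertexShift A0 A1).Nonempty)
    (hbg : BlockGluing (vertexShift A0 A1))
    (h2 : 2 ≤ (blockFuns (vertexShift A0 A1) 1).ncard) :
    0 < Filter.liminf
      (fun n : ℕ =>
        Real.log (Real.log ((blockFuns (vertexShift A0 A1) n).ncard : ℝ)) / (n : ℝ))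
      Filter.atTop :=
  stmt8_general A0 A1 hbg h2
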